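/- Let X be a complex Banach space and suppose that f : [0,∞) → X is almost anti-periodic. Then there exists a unique almost anti-periodic function F : ℝ → X such that F(t) = f(t) for all t ≥ 0. -/

import Mathlib

/-- A set `S` of (positive) real numbers is relatively dense. -/
def RelativelyDense (S : Set ℝ) : Prop :=
  ∃ l > 0, ∀ a : ℝ, 0 ≤ a → ∃ τ ∈ S, a ≤ τ ∧ τ ≤ a + l

/-- `f` is almost anti-periodic on `I`. -/
def AlmostAntiPeriodicOn {X : Type*} [NormedAddCommGroup X] (I : Set ℝ) (f : ℝ → X) : Prop :=
  ∀ ε > 0, RelativelyDense {τ : ℝ | 0 < τ ∧ ∀ t ∈ I, ‖f (t + τ) + f t‖ ≤ ε}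

/-!
Choose `τₙ → ∞` with `‖f (t + τₙ) + f t‖ ≤ εₙ → 0` on `[0, ∞)`. Two anti-periods `τ, σ` give
`f (t + τ) ≈ -f (t + τ + σ) ≈ f (t + σ)`, so `-f (t + τₙ)` converges, locally uniformly in `t`,
to a continuous `F` with `F = f` on `[0, ∞)`, and every `ε`-anti-period of `f` is one of `F`.
An almost anti-periodic `F` on `ℝ` is determined by its values on `[0, ∞)`, because
`F t ≈ -F (t + σ)` for anti-periods `σ ≥ |t|`.
-/

open Filter Set Topology

lemma RelativelyDense.mono {S T : Set ℝ} (hS : RelativelyDense S) (hST : S ⊆ T) :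
    RelativelyDense T := by
  obtain ⟨l, hl, hS⟩ := hS
  refine ⟨l, hl, fun a ha => ?_⟩
  obtain ⟨τ, hτ, hle⟩ := hS a ha
  exact ⟨τ, hST hτ, hle⟩

section

variable {X : Type*} [NormedAddCommGroup X]

lemma AlmostAntiPeriodicOn.exists_antiperiod_ge {I : Set ℝ} {f : ℝ → X}
    (h : AlmostAntiPeriodicOn I f) {ε : ℝ} (hε : 0 < ε) (a : ℝ) :
    ∃ τ, a ≤ τ ∧ ∀ t ∈ I, ‖f (t + τ) + f t‖ ≤ ε := by
  obtain ⟨l, -, hl⟩ := h ε hε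
  obtain ⟨τ, ⟨-, hτ⟩, haτ, -⟩ := hl (max a 0) (le_max_right _ _)
  exact ⟨τ, (le_max_left _ _).trans haτ, hτ⟩

lemma norm_sub_le_of_antiperiods {f : ℝ → X} {τ σ a b t : ℝ}
    (hτ : ∀ s, 0 ≤ s → ‖f (s + τ) + f s‖ ≤ a) (hσ : ∀ s, 0 ≤ s → ‖f (s + σ) + f s‖ ≤ b)
    (htτ : 0 ≤ t + τ) (htσ : 0 ≤ t + σ) :
    ‖f (t + τ) - f (t + σ)‖ ≤ a + b := by
  have h₁ := hσ (t + τ) htτ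
  have h₂ := hτ (t + σ) htσ
  rw [add_right_comm] at h₂
  calc ‖f (t + τ) - f (t + σ)‖
      = ‖(f (t + τ + σ) + f (t + τ)) - (f (t + τ + σ) + f (t + σ))‖ := by congr 1; abel
    _ ≤ ‖f (t + τ + σ) + f (t + τ)‖ + ‖f (t + τ + σ) + f (t + σ)‖ := norm_sub_le _ _
    _ ≤ a + b := by linarith

lemma AlmostAntiPeriodicOn.eq_of_eqOn_Ici {F G : ℝ → X}
    (hF : AlmostAntiPeriodicOn univ F) (hG : AlmostAntiPeriodicOn univ G)
    (hFG : EqOn F G (Ici 0)) : F = G := by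
  funext t
  refine eq_of_forall_dist_le fun ε hε => ?_
  obtain ⟨σ, hσt, hσ⟩ := hF.exists_antiperiod_ge (by positivity : 0 < ε / 4) |t|
  obtain ⟨ρ, hρt, hρ⟩ := hG.exists_antiperiod_ge (by positivity : 0 < ε / 4) |t|
  have htσ : 0 ≤ t + σ := by linarith [neg_abs_le t]
  have htρ : 0 ≤ t + ρ := by linarith [neg_abs_le t]
  have hρF : ∀ s, 0 ≤ s → ‖F (s + ρ) + F s‖ ≤ ε / 4 := fun s hs => by
    rw [hFG hs, hFG (show 0 ≤ s + ρ by linarith [abs_nonneg t])]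
    exact hρ s (mem_univ s)
  have hFG' : F (t + ρ) = G (t + ρ) := hFG htρ
  have hshift := norm_sub_le_of_antiperiods (fun s _ => hσ s (mem_univ s)) hρF htσ htρ
  have hσt' := hσ t (mem_univ t)
  have hρt' := hρ t (mem_univ t)
  rw [dist_eq_norm]
  calc ‖F t - G t‖
      = ‖(F (t + σ) + F t) - (G (t + ρ) + G t) - (F (t + σ) - F (t + ρ))‖ := by
        rw [hFG']; congr 1; abel
    _ ≤ ‖F (t + σ) + F t‖ + ‖G (t + ρ) + G t‖ + ‖F (t + σ) - F (t + ρ)‖ :=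
        (norm_sub_le _ _).trans (add_le_add_left (norm_sub_le _ _) _)
    _ ≤ ε := by linarith

structure IsAntiperiodSeq (f : ℝ → X) (τ ε : ℕ → ℝ) : Prop where
  tendsto_atTop : Tendsto τ atTop atTop
  tendsto_zero : Tendsto ε atTop (𝓝 0)
  norm_add_le : ∀ n s, 0 ≤ s → ‖f (s + τ n) + f s‖ ≤ ε n

lemma AlmostAntiPeriodicOn.exists_isAntiperiodSeq {f : ℝ → X}
    (h : AlmostAntiPeriodicOn (Ici 0) f) :
    ∃ τ : ℕ → ℝ, IsAntiperiodSeq f τ fun n => 1 / ((n : ℝ) + 1) := by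
  choose τ hnτ hτ using fun n : ℕ =>
    h.exists_antiperiod_ge (ε := 1 / ((n : ℝ) + 1)) (by positivity) n
  exact ⟨τ, tendsto_atTop_mono hnτ tendsto_natCast_atTop_atTop,
    tendsto_one_div_add_atTop_nhds_zero_nat, hτ⟩

noncomputable def antiperiodicExtension (f : ℝ → X) (τ : ℕ → ℝ) (t : ℝ) : X :=
  limUnder atTop fun n => -f (t + τ n)

namespace IsAntiperiodSeq

variable {f : ℝ → X} {τ ε : ℕ → ℝ}

lemma eventually_nonneg_add (h : IsAntiperiodSeq f τ ε) (t : ℝ) :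
    ∀ᶠ n in atTop, 0 ≤ t + τ n :=
  (h.tendsto_atTop.eventually_ge_atTop (-t)).mono fun _ hn => by linarith

lemma cauchySeq (h : IsAntiperiodSeq f τ ε) (t : ℝ) : CauchySeq fun n => -f (t + τ n) := by
  rw [cauchySeq_iff_tendsto_dist_atTop_0, ← prod_atTop_atTop_eq]
  have hε : Tendsto (fun p : ℕ × ℕ => ε p.1 + ε p.2) (atTop ×ˢ atTop) (𝓝 0) := by
    simpa using (h.tendsto_zero.comp tendsto_fst).add (h.tendsto_zero.comp tendsto_snd)
  refine squeeze_zero' (Eventually.of_forall fun _ => dist_nonneg) ?_ hε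
  filter_upwards [tendsto_fst.eventually (h.eventually_nonneg_add t),
    tendsto_snd.eventually (h.eventually_nonneg_add t)] with p hp₁ hp₂
  rw [dist_neg_neg, dist_eq_norm]
  exact norm_sub_le_of_antiperiods (h.norm_add_le p.1) (h.norm_add_le p.2) hp₁ hp₂

variable [CompleteSpace X]

lemma tendsto_antiperiodicExtension (h : IsAntiperiodSeq f τ ε) (t : ℝ) :
    Tendsto (fun n => -f (t + τ n)) atTop (𝓝 (antiperiodicExtension f τ t)) :=
  (h.cauchySeq t).tendsto_limUnder

lemma antiperiodicExtension_eq (h : IsAntiperiodSeq f τ ε) {t : ℝ} (ht : 0 ≤ t) :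
    antiperiodicExtension f τ t = f t := by
  refine tendsto_nhds_unique (h.tendsto_antiperiodicExtension t) ?_
  rw [tendsto_iff_norm_sub_tendsto_zero]
  refine squeeze_zero (fun _ => norm_nonneg _) (fun n => ?_) h.tendsto_zero
  rw [← norm_neg, neg_sub, sub_neg_eq_add, add_comm]
  exact h.norm_add_le n t ht

lemma norm_antiperiodicExtension_add_le (h : IsAntiperiodSeq f τ ε) {t : ℝ} {n : ℕ}
    (hn : 0 ≤ t + τ n) : ‖antiperiodicExtension f τ t + f (t + τ n)‖ ≤ ε n := by
  have hlim : Tendsto (fun m => ‖-f (t + τ m) + f (t + τ n)‖) atTop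
      (𝓝 ‖antiperiodicExtension f τ t + f (t + τ n)‖) :=
    ((h.tendsto_antiperiodicExtension t).add_const _).norm
  refine le_of_tendsto_of_tendsto hlim
    (by simpa using tendsto_const_nhds.add h.tendsto_zero) ?_
  filter_upwards [h.eventually_nonneg_add t] with m hm
  rw [neg_add_eq_sub]
  exact norm_sub_le_of_antiperiods (h.norm_add_le n) (h.norm_add_le m) hn hm

lemma tendstoUniformlyOn_antiperiodicExtension (h : IsAntiperiodSeq f τ ε) (a : ℝ) :
    TendstoUniformlyOn (fun n t => -f (t + τ n)) (antiperiodicExtension f τ) atTop (Ici a) := by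
  rw [Metric.tendstoUniformlyOn_iff]
  intro δ hδ
  filter_upwards [h.tendsto_zero.eventually (gt_mem_nhds hδ),
    h.tendsto_atTop.eventually_ge_atTop (-a)] with n hεn hτn t ht
  rw [dist_eq_norm, sub_neg_eq_add]
  exact (h.norm_antiperiodicExtension_add_le (by linarith [mem_Ici.1 ht])).trans_lt hεn

lemma continuous_antiperiodicExtension (h : IsAntiperiodSeq f τ ε)
    (hf : ContinuousOn f (Ici 0)) : Continuous (antiperiodicExtension f τ) := by
  have hcont : ∀ a, ContinuousOn (antiperiodicExtension f τ) (Ici a) := fun a => by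
    refine (h.tendstoUniformlyOn_antiperiodicExtension a).continuousOn
      (Eventually.frequently ?_)
    filter_upwards [h.tendsto_atTop.eventually_ge_atTop (-a)] with n hn
    exact (hf.comp (continuous_add_const (τ n)).continuousOn
      fun t (ht : a ≤ t) => show 0 ≤ t + τ n by linarith).neg
  exact continuous_iff_continuousAt.2 fun t =>
    (hcont (t - 1)).continuousAt (Ici_mem_nhds (by linarith))

lemma norm_antiperiodicExtension_add_le_of_antiperiod (h : IsAntiperiodSeq f τ ε)
    {σ δ : ℝ} (hσ : ∀ s, 0 ≤ s → ‖f (s + σ) + f s‖ ≤ δ) (t : ℝ) :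
    ‖antiperiodicExtension f τ (t + σ) + antiperiodicExtension f τ t‖ ≤ δ := by
  have hlim := ((h.tendsto_antiperiodicExtension (t + σ)).add
    (h.tendsto_antiperiodicExtension t)).norm
  refine le_of_tendsto hlim ?_
  filter_upwards [h.eventually_nonneg_add t] with n hn
  rw [← neg_add, norm_neg, add_right_comm]
  exact hσ _ hn

lemma almostAntiPeriodicOn_univ (h : IsAntiperiodSeq f τ ε)
    (hf : AlmostAntiPeriodicOn (Ici 0) f) :
    AlmostAntiPeriodicOn univ (antiperiodicExtension f τ) := fun δ hδ =>
  (hf δ hδ).mono fun _ ⟨hσ₀, hσ⟩ =>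
    ⟨hσ₀, fun t _ => h.norm_antiperiodicExtension_add_le_of_antiperiod hσ t⟩

end IsAntiperiodSeq

end

theorem unique_almostAntiPeriodic_extension_general
    {X : Type*} [NormedAddCommGroup X] [CompleteSpace X]
    (f : ℝ → X) (hf : ContinuousOn f (Set.Ici (0 : ℝ)))
    (h : AlmostAntiPeriodicOn (Set.Ici (0 : ℝ)) f) :
    ∃! F : ℝ → X, Continuous F ∧ AlmostAntiPeriodicOn Set.univ F ∧
      ∀ t : ℝ, 0 ≤ t → F t = f t := by
  obtain ⟨τ, hτ⟩ := h.exists_isAntiperiodSeq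
  have hF := hτ.almostAntiPeriodicOn_univ h
  refine ⟨antiperiodicExtension f τ,
    ⟨hτ.continuous_antiperiodicExtension hf, hF, fun t ht => hτ.antiperiodicExtension_eq ht⟩, ?_⟩
  rintro G ⟨-, hG, hGf⟩
  exact hG.eq_of_eqOn_Ici hF fun t ht => (hGf t ht).trans (hτ.antiperiodicExtension_eq ht).symm

/-- An almost anti-periodic function on `[0,∞)` has a unique almost anti-periodic
extension to the whole real line. -/
theorem unique_almostAntiPeriodic_extension
    {X : Type*} [NormedAddCommGroup X] [NormedSpace ℂ X] [CompleteSpace X]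
    (f : ℝ → X) (hf : ContinuousOn f (Set.Ici (0 : ℝ)))
    (h : AlmostAntiPeriodicOn (Set.Ici (0 : ℝ)) f) :
    ∃! F : ℝ → X, Continuous F ∧ AlmostAntiPeriodicOn Set.univ F ∧
      ∀ t : ℝ, 0 ≤ t → F t = f t :=
  unique_almostAntiPeriodic_extension_general f hf h
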